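/- arXiv:2403.03975 — 2 statements merged into one kernel-verified Lean document; each statement's English description precedes it below -/
import Mathlib

section
/- Cellwise Shapley values are scale invariant: if A ∈ ℝ^{p×p} and B ∈ ℝ^{q×q} are invertible diagonal matrices, and Φ(X; M, Ω_row, Ω_col) = (X−M) ∘ (Ω_row (X−M) Ω_col), then Φ(AXB; AMB, (AΣ_row Aᵀ)⁻¹, (BᵀΣ_col B)⁻¹) = Φ(X; M, Σ_row⁻¹, Σ_col⁻¹). -/
open Matrix

/-!
The transformed residual is `A (X − M) B` and the transformed precisions are
`A⁻¹ Srow⁻¹ A⁻¹` and `B⁻¹ Scol⁻¹ B⁻¹`, so the second Hadamard factor becomes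
`A⁻¹ (Srow⁻¹ (X − M) Scol⁻¹) B⁻¹`. Entrywise, scaling by diagonal matrices multiplies cell
`(i, j)` by `Aᵢᵢ Bⱼⱼ` in the first factor and by `(Aᵢᵢ Bⱼⱼ)⁻¹` in the second, which cancel.
-/

namespace Matrix

variable {m n α : Type*} [Fintype m] [Fintype n] [DecidableEq m] [DecidableEq n] [CommRing α]

theorem IsDiag.mul_mul_apply {D : Matrix m m α} {E : Matrix n n α} (hD : D.IsDiag)
    (hE : E.IsDiag) (X : Matrix m n α) (i : m) (j : n) :
    (D * X * E) i j = D i i * X i j * E j j := by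
  conv_lhs => rw [← hD.diagonal_diag, ← hE.diagonal_diag]
  simp only [diagonal_mul, mul_diagonal, diag_apply]

theorem IsDiag.inv {A : Matrix m m α} (hA : A.IsDiag) : A⁻¹.IsDiag := by
  rw [← hA.diagonal_diag, inv_diagonal]
  exact isDiag_diagonal _

theorem IsDiag.apply_mul_inv_apply {A : Matrix m m α} (hA : A.IsDiag) (hu : IsUnit A.det)
    (i : m) : A i i * A⁻¹ i i = 1 := by
  simpa [mul_nonsing_inv A hu] using (hA.mul_mul_apply hA.inv 1 i i).symm

theorem IsDiag.hadamard_mul_mul_inv {A : Matrix m m α} {B : Matrix n n α} (hA : A.IsDiag)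
    (hB : B.IsDiag) (hAu : IsUnit A.det) (hBu : IsUnit B.det) (X Y : Matrix m n α) :
    (A * X * B) ⊙ (A⁻¹ * Y * B⁻¹) = X ⊙ Y := by
  ext i j
  rw [hadamard_apply, hadamard_apply, hA.mul_mul_apply hB, hA.inv.mul_mul_apply hB.inv]
  linear_combination (X i j * Y i j * B j j * B⁻¹ j j) * hA.apply_mul_inv_apply hAu i
    + X i j * Y i j * hB.apply_mul_inv_apply hBu j

end Matrix

theorem cellwise_shapley_scale_invariant_general {p q : ℕ}
    (A : Matrix (Fin p) (Fin p) ℝ) (B : Matrix (Fin q) (Fin q) ℝ)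
    (hAdiag : A.IsDiag) (hBdiag : B.IsDiag)
    (hA : IsUnit A.det) (hB : IsUnit B.det)
    (X M : Matrix (Fin p) (Fin q) ℝ)
    (Srow : Matrix (Fin p) (Fin p) ℝ) (Scol : Matrix (Fin q) (Fin q) ℝ) :
    Matrix.hadamard (A * X * B - A * M * B)
        ((A * Srow * Aᵀ)⁻¹ * (A * X * B - A * M * B) * (Bᵀ * Scol * B)⁻¹)
      = Matrix.hadamard (X - M) (Srow⁻¹ * (X - M) * Scol⁻¹) := by
  have hdiff : A * X * B - A * M * B = A * (X - M) * B := by rw [Matrix.mul_sub, Matrix.sub_mul]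
  have hrow : (A * Srow * Aᵀ)⁻¹ = A⁻¹ * Srow⁻¹ * A⁻¹ := by
    rw [hAdiag.isSymm.eq, Matrix.mul_inv_rev, Matrix.mul_inv_rev, Matrix.mul_assoc]
  have hcol : (Bᵀ * Scol * B)⁻¹ = B⁻¹ * Scol⁻¹ * B⁻¹ := by
    rw [hBdiag.isSymm.eq, Matrix.mul_inv_rev, Matrix.mul_inv_rev, Matrix.mul_assoc]
  have hcancel : A⁻¹ * Srow⁻¹ * A⁻¹ * (A * (X - M) * B) * (B⁻¹ * Scol⁻¹ * B⁻¹)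
      = A⁻¹ * (Srow⁻¹ * (X - M) * Scol⁻¹) * B⁻¹ := by
    simp only [Matrix.mul_assoc, nonsing_inv_mul_cancel_left _ _ hA,
      mul_nonsing_inv_cancel_left _ _ hB]
  rw [hdiff, hrow, hcol, hcancel, hAdiag.hadamard_mul_mul_inv hBdiag hA hB]

/-- Cellwise Shapley values are scale invariant: for invertible diagonal matrices `A`, `B`,
transforming `X ↦ AXB`, `M ↦ AMB`, `Srow ↦ A Srow Aᵀ`, `Scol ↦ Bᵀ Scol B` leaves the
cellwise Shapley value matrix `Φ(X) = (X−M) ∘ (Ωrow (X−M) Ωcol)` unchanged. -/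
theorem cellwise_shapley_scale_invariant {p q : ℕ}
    (A : Matrix (Fin p) (Fin p) ℝ) (B : Matrix (Fin q) (Fin q) ℝ)
    (hAdiag : A.IsDiag) (hBdiag : B.IsDiag)
    (hA : IsUnit A.det) (hB : IsUnit B.det)
    (X M : Matrix (Fin p) (Fin q) ℝ)
    (Srow : Matrix (Fin p) (Fin p) ℝ) (Scol : Matrix (Fin q) (Fin q) ℝ)
    (hrow : Srow.PosDef) (hcol : Scol.PosDef) :
    Matrix.hadamard (A * X * B - A * M * B)
        ((A * Srow * Aᵀ)⁻¹ * (A * X * B - A * M * B) * (Bᵀ * Scol * B)⁻¹)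
      = Matrix.hadamard (X - M) (Srow⁻¹ * (X - M) * Scol⁻¹) :=
  cellwise_shapley_scale_invariant_general A B hAdiag hBdiag hA hB X M Srow Scol
end

section
/- Averaging the marginal contributions over all subsets with Shapley weights recovers the closed-form Shapley value: ∑_{S ⊆ P\{k}} (|S|!(p−|S|−1)!/p!) · Δ_k md²(x̂^S) = (x_k − μ_k) ∑_{j=1}^p (x_j − μ_j) ω_{jk}, where P = {1,…,p}. -/
/-!
With `v_S = x̂^S − μ` and `e = (x_k − μ_k) e_k`, the marginal contribution of `k ∉ S` is
`(2 v_S + e) ⬝ Ω e`, an affine function of `v_S`. The Shapley weights over `S ⊆ P∖{k}` sum to 1,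
and every `j ≠ k` lies in sets of total weight exactly `1/2`, since complementation in `P∖{k}`
preserves the weights. Hence the weighted mean of `2 v_S + e` is `v_{P∖{k}} + e = x − μ`, and the
average is `(x − μ) ⬝ Ω e = (x_k − μ_k) ∑_j (x_j − μ_j) ω_{jk}`.
-/

open Matrix Finset

open scoped Nat

noncomputable def shapleyWeight (p s : ℕ) : ℝ := (s ! * (p - s - 1)! : ℝ) / p !

section ShapleyWeight

variable {α : Type*} {A : Finset α} {p : ℕ}

lemma shapleyWeight_sub_one_sub {s : ℕ} (hs : s < p) :
    shapleyWeight p (p - 1 - s) = shapleyWeight p s := by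
  rw [shapleyWeight, shapleyWeight, show p - (p - 1 - s) - 1 = s by omega, Nat.sub_right_comm,
    mul_comm]

lemma choose_mul_shapleyWeight {q m : ℕ} (hm : m ≤ q) :
    (q.choose m : ℝ) * shapleyWeight (q + 1) m = (q + 1 : ℝ)⁻¹ := by
  rw [shapleyWeight, Nat.cast_choose ℝ hm, show q + 1 - m - 1 = q - m by omega,
    Nat.factorial_succ]
  push_cast
  field_simp

lemma sum_powerset_shapleyWeight (hA : #A + 1 = p) :
    ∑ S ∈ A.powerset, shapleyWeight p #S = 1 := by
  subst hA
  simp_rw [sum_powerset_apply_card, nsmul_eq_mul]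
  rw [sum_congr rfl fun m hm => choose_mul_shapleyWeight (Nat.lt_succ_iff.mp (mem_range.mp hm))]
  simp [field]

lemma sum_powerset_filter_mem_shapleyWeight [DecidableEq α] (hA : #A + 1 = p) {j : α}
    (hj : j ∈ A) :
    ∑ S ∈ A.powerset with j ∈ S, shapleyWeight p #S = 2⁻¹ := by
  -- `S ↦ A \ S` preserves the weights and swaps `j ∈ S` with `j ∉ S`.
  have hcompl : ∑ S ∈ A.powerset with j ∈ S, shapleyWeight p #S =
      ∑ S ∈ A.powerset with j ∉ S, shapleyWeight p #S := by
    refine sum_nbij' (A \ ·) (A \ ·) ?_ ?_ ?_ ?_ ?_ <;> simp only [mem_filter, mem_powerset]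
    · rintro S ⟨-, hjS⟩
      simp [hjS]
    · rintro S ⟨-, hjS⟩
      simp [hj, hjS]
    · rintro S ⟨hSA, -⟩
      exact Finset.sdiff_sdiff_eq_self hSA
    · rintro S ⟨hSA, -⟩
      exact Finset.sdiff_sdiff_eq_self hSA
    · rintro S ⟨hSA, -⟩
      have hS : #S < #A + 1 := Nat.lt_succ_of_le (card_le_card hSA)
      rw [card_sdiff_of_subset hSA, ← hA, ← shapleyWeight_sub_one_sub hS, Nat.add_sub_cancel]
  have htotal := sum_filter_add_sum_filter_not A.powerset (j ∈ ·) (fun S => shapleyWeight p #S)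
  rw [sum_powerset_shapleyWeight hA] at htotal
  linarith

lemma sum_powerset_shapleyWeight_smul_piecewise [DecidableEq α] (hA : #A + 1 = p) (d : α → ℝ) :
    ∑ S ∈ A.powerset, shapleyWeight p #S • S.piecewise d 0 = (2⁻¹ : ℝ) • A.piecewise d 0 := by
  ext j
  simp only [Finset.sum_apply, Pi.smul_apply, piecewise, Pi.zero_apply, smul_eq_mul, mul_ite,
    mul_zero, ← sum_filter, ← sum_mul]
  by_cases hj : j ∈ A
  · rw [sum_powerset_filter_mem_shapleyWeight hA hj, if_pos hj]
  · rw [if_neg hj, filter_false_of_mem fun S hS hjS => hj (mem_powerset.mp hS hjS), sum_empty,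
      zero_mul]

lemma sum_powerset_shapleyWeight_smul_two_smul_piecewise_add [DecidableEq α] (hA : #A + 1 = p)
    (d e : α → ℝ) :
    ∑ S ∈ A.powerset, shapleyWeight p #S • ((2 : ℝ) • S.piecewise d 0 + e) =
      A.piecewise d 0 + e := by
  simp only [smul_add, sum_add_distrib, ← sum_smul, smul_comm _ (2 : ℝ), ← smul_sum,
    sum_powerset_shapleyWeight_smul_piecewise hA, sum_powerset_shapleyWeight hA]
  rw [smul_smul, mul_inv_cancel₀ two_ne_zero, one_smul, one_smul]

end ShapleyWeight

lemma Finset.piecewise_insert_zero_of_notMem {ι M : Type*} [DecidableEq ι] [AddMonoid M]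
    {S : Finset ι} {k : ι} (hk : k ∉ S) (d : ι → M) :
    (insert k S).piecewise d 0 = S.piecewise d 0 + Pi.single k (d k) := by
  ext j
  by_cases hjk : j = k
  · subst hjk; simp [hk]
  · simp [piecewise, hjk]

lemma Matrix.IsSymm.dotProduct_mulVec_add_sub {ι R : Type*} [Fintype ι] [CommRing R]
    {O : Matrix ι ι R} (hO : O.IsSymm) (v w : ι → R) :
    (v + w) ⬝ᵥ (O *ᵥ (v + w)) - v ⬝ᵥ (O *ᵥ v) = ((2 : R) • v + w) ⬝ᵥ (O *ᵥ w) := by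
  have hswap : w ⬝ᵥ (O *ᵥ v) = v ⬝ᵥ (O *ᵥ w) := by
    rw [dotProduct_mulVec, ← mulVec_transpose, hO.eq, dotProduct_comm]
  simp only [mulVec_add, add_dotProduct, dotProduct_add, two_smul, hswap]
  ring

lemma Matrix.dotProduct_mulVec_single {ι R : Type*} [Fintype ι] [DecidableEq ι] [CommRing R]
    (v : ι → R) (O : Matrix ι ι R) (k : ι) (a : R) :
    v ⬝ᵥ (O *ᵥ Pi.single k a) = a * ∑ j, v j * O j k := by
  simp only [mulVec_single, dotProduct, Pi.smul_apply, col_apply, MulOpposite.smul_eq_mul_unop,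
    MulOpposite.unop_op, mul_sum]
  exact sum_congr rfl fun j _ => by ring

/-- Averaging the marginal contributions to the squared Mahalanobis distance over all subsets
`S ⊆ P\{k}` with the Shapley weights `|S|!(p−|S|−1)!/p!` recovers the closed-form Shapley
value `(x_k − μ_k) ∑_j (x_j − μ_j) ω_{jk}`. -/
theorem shapley_average_closed_form {p : ℕ}
    (x μ : Fin p → ℝ) (O : Matrix (Fin p) (Fin p) ℝ) (hsym : Oᵀ = O) (k : Fin p) :
    (letI xhat : Finset (Fin p) → Fin p → ℝ := fun T j => if j ∈ T then x j else μ j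
     letI md2 : (Fin p → ℝ) → ℝ := fun y => (y - μ) ⬝ᵥ (O *ᵥ (y - μ))
     ∑ S ∈ (Finset.univ.erase k).powerset,
       ((Nat.factorial S.card * Nat.factorial (p - S.card - 1) : ℝ) / Nat.factorial p) *
         (md2 (xhat (insert k S)) - md2 (xhat S)))
      = (x k - μ k) * ∑ j, (x j - μ j) * O j k := by
  have hdev (T : Finset (Fin p)) :
      (fun j => if j ∈ T then x j else μ j) - μ = T.piecewise (x - μ) 0 := by
    ext j
    by_cases hj : j ∈ T <;> simp [hj]
  dsimp only
  simp only [hdev]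
  set A := univ.erase k
  set v : Finset (Fin p) → Fin p → ℝ := fun S => S.piecewise (x - μ) 0
  set e : Fin p → ℝ := Pi.single k ((x - μ) k)
  have hA : #A + 1 = p := by rw [card_erase_add_one (mem_univ k), card_univ, Fintype.card_fin]
  have hmarg : ∀ S ∈ A.powerset,
      v (insert k S) ⬝ᵥ (O *ᵥ v (insert k S)) - v S ⬝ᵥ (O *ᵥ v S) =
        ((2 : ℝ) • v S + e) ⬝ᵥ (O *ᵥ e) := by
    intro S hS
    have hk : k ∉ S := fun hk => notMem_erase k univ (mem_powerset.mp hS hk)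
    have hinsert : v (insert k S) = v S + e := piecewise_insert_zero_of_notMem hk _
    rw [hinsert, IsSymm.dotProduct_mulVec_add_sub hsym]
  calc _ = ∑ S ∈ A.powerset, shapleyWeight p #S • (((2 : ℝ) • v S + e) ⬝ᵥ (O *ᵥ e)) :=
        sum_congr rfl fun S hS => by rw [hmarg S hS]; rfl
    _ = (v A + e) ⬝ᵥ (O *ᵥ e) := by
        simp only [← smul_dotProduct, ← sum_dotProduct,
          sum_powerset_shapleyWeight_smul_two_smul_piecewise_add hA, v]
    _ = (x - μ) ⬝ᵥ (O *ᵥ e) := by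
        rw [← piecewise_insert_zero_of_notMem (notMem_erase k univ), insert_erase (mem_univ k),
          piecewise_univ]
    _ = _ := dotProduct_mulVec_single _ _ _ _
end
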